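/- arXiv:2403.00576 — 2 statements merged into one kernel-verified Lean document; each statement's English description precedes it below -/
import Mathlib

section
/- For any nonzero Hilbert–Schmidt operator S on L^2(R^d), the closed linear span of the set {π(z) S π(w)^* : w, z ∈ R^{2d}} equals the whole space of Hilbert–Schmidt operators. -/
open MeasureTheory Complex Filter Topology
open scoped ENNReal

noncomputable section

abbrev Rd (d : ℕ) := Fin d → ℝ
abbrev Phase (d : ℕ) := Rd d × Rd d

/-- Euclidean dot product on `ℝ^d`. -/
def dotR {d : ℕ} (x y : Rd d) : ℝ := ∑ i, x i * y i

/-- `e2pi r = e^{2πi r}`. -/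
def e2pi (r : ℝ) : ℂ := Complex.exp ((2 * Real.pi * r : ℝ) * Complex.I)

/-- Time-frequency shift `π(z) = M_ω T_x` acting on functions on `ℝ^d`. -/
def tfs {d : ℕ} (z : Phase d) (f : Rd d → ℂ) : Rd d → ℂ :=
  fun t => e2pi (dotR z.2 t) * f (t - z.1)

/-- Short-time Fourier transform `V_g f (z) = ⟨f, π(z) g⟩`. -/
def Vst {d : ℕ} (g f : Rd d → ℂ) (z : Phase d) : ℂ :=
  ∫ t : Rd d, f t * (starRingEnd ℂ) (tfs z g t)

/-- Integral kernel of the rank-one operator `f ⊗ g : h ↦ ⟨h,g⟩ f`. -/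
def kerRankOne {d : ℕ} (f g : Rd d → ℂ) : Rd d × Rd d → ℂ :=
  fun p => f p.1 * (starRingEnd ℂ) (g p.2)

/-- Hilbert–Schmidt inner product `⟨S,T⟩ = tr(S T^*)` in terms of integral kernels. -/
def innerHS {d : ℕ} (K L : Rd d × Rd d → ℂ) : ℂ :=
  ∫ p : Rd d × Rd d, K p * (starRingEnd ℂ) (L p)

/-- Kernel of `γ_{w,z}(S) = π(z) S π(w)^*`, in terms of the kernel `K` of `S`. -/
def gammaK {d : ℕ} (w z : Phase d) (K : Rd d × Rd d → ℂ) : Rd d × Rd d → ℂ :=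
  fun p => e2pi (dotR z.2 p.1 - dotR w.2 p.2) * K (p.1 - z.1, p.2 - w.1)

/-- Polarised Cohen's class `Q_S T (w,z) = ⟨T, γ_{w,z}(S)⟩_{HS}`, in terms of kernels. -/
def QK {d : ℕ} (KS KT : Rd d × Rd d → ℂ) (w z : Phase d) : ℂ :=
  innerHS KT (gammaK w z KS)

/-! If `U` is orthogonal to every `γ_{w,z}(S)`, then `Q_S U ≡ 0`. Once the translation parts
`(z.1, w.1) = -a` are fixed, `(z.2, w.2) ↦ Q_S U (w, z)` is the Fourier transform of the
integrable function `U · conj S(· + a)`, so Fourier uniqueness gives `U(p) S(p + a) = 0` for a.e.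
`p`, for every `a`. By Tonelli, `∫∫ |U(p)| |S(p + a)| da dp = ‖U‖₁ ‖S‖₁` in `[0, ∞]` then
vanishes, and `S ≠ 0` forces `U = 0`. -/

open scoped FourierTransform InnerProductSpace

theorem ae_eq_zero_of_forall_mul_translate_ae_eq_zero {G R : Type*} [AddGroup G]
    [MeasurableSpace G] [MeasurableAdd₂ G] {μ : Measure G} [SFinite μ] [μ.IsAddLeftInvariant]
    [NormedDivisionRing R] {f g : G → R} (hf : AEStronglyMeasurable f μ)
    (hg : AEStronglyMeasurable g μ) (hf0 : ¬ f =ᵐ[μ] 0)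
    (h : ∀ a, (fun p => g p * f (p + a)) =ᵐ[μ] 0) : g =ᵐ[μ] 0 := by
  have hmeas : AEMeasurable (Function.uncurry fun a p => ‖g p‖ₑ * ‖f (p + a)‖ₑ) (μ.prod μ) :=
    (hg.comp_quasiMeasurePreserving Measure.quasiMeasurePreserving_snd).enorm.mul
      (hf.comp_quasiMeasurePreserving (quasiMeasurePreserving_add_swap μ μ)).enorm
  have hslice (a : G) : ∫⁻ p, ‖g p‖ₑ * ‖f (p + a)‖ₑ ∂μ = 0 := by
    rw [← lintegral_zero]
    refine lintegral_congr_ae ?_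
    filter_upwards [h a] with p hp
    simpa [← enorm_mul] using hp
  have key : (∫⁻ p, ‖g p‖ₑ ∂μ) * ∫⁻ x, ‖f x‖ₑ ∂μ = 0 := calc
    _ = ∫⁻ p, ∫⁻ a, ‖g p‖ₑ * ‖f (p + a)‖ₑ ∂μ ∂μ := by
      rw [← lintegral_mul_const'' _ hg.enorm]
      refine lintegral_congr fun p => ?_
      rw [lintegral_const_mul' _ _ enorm_ne_top, lintegral_add_left_eq_self (‖f ·‖ₑ) p]
    _ = ∫⁻ a, ∫⁻ p, ‖g p‖ₑ * ‖f (p + a)‖ₑ ∂μ ∂μ := (lintegral_lintegral_swap hmeas).symm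
    _ = 0 := by simp [hslice]
  obtain hg' | hf' := mul_eq_zero.1 key
  · filter_upwards [(lintegral_eq_zero_iff' hg.enorm).1 hg'] with x hx
    simpa using hx
  · refine absurd ?_ hf0
    filter_upwards [(lintegral_eq_zero_iff' hf.enorm).1 hf'] with x hx
    simpa using hx

theorem MeasureTheory.Integrable.ae_eq_zero_of_fourier_eq_zero {V : Type*}
    [NormedAddCommGroup V] [InnerProductSpace ℝ V] [FiniteDimensional ℝ V] [MeasurableSpace V]
    [BorelSpace V] {f : V → ℂ} (hf : Integrable f) (h : 𝓕 f = 0) : f =ᵐ[volume] 0 := by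
  refine ae_eq_zero_of_integral_contDiff_smul_eq_zero hf.locallyIntegrable fun g hg hsupp => ?_
  set φ : SchwartzMap V ℂ := (hsupp.comp_left (g := Complex.ofRealCLM) rfl).toSchwartzMap
    (Complex.ofRealCLM.contDiff.comp hg)
  calc ∫ x, g x • f x = ∫ x, f x • 𝓕 (𝓕⁻ φ) x := by
        congr 1 with x
        rw [FourierTransform.fourier_fourierInv_eq]
        simp [φ, Complex.real_smul, mul_comm]
    _ = ∫ ξ, 𝓕 f ξ • 𝓕⁻ φ ξ := by
        rw [SchwartzMap.fourier_coe]
        simpa using! (VectorFourier.integral_fourierIntegral_smul_eq_flip (L := innerₗ V)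
          Real.continuous_fourierChar continuous_inner hf (𝓕⁻ φ).integrable).symm
    _ = 0 := by simp [h]

/-- `Rd d × Rd d` carries the sup norm; the Fourier transform lives on an inner product space. -/
def phaseEquivEuclidean (d : ℕ) : Rd d × Rd d ≃ᵐ EuclideanSpace ℝ (Fin d ⊕ Fin d) :=
  (MeasurableEquiv.sumPiEquivProdPi fun _ => ℝ).symm.trans (MeasurableEquiv.toLp 2 _)

theorem measurePreserving_phaseEquivEuclidean (d : ℕ) :
    MeasurePreserving (phaseEquivEuclidean d) :=
  ((EuclideanSpace.volume_preserving_symm_measurableEquiv_toLp (Fin d ⊕ Fin d)).symm _).comp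
    (volume_measurePreserving_sumPiEquivProdPi_symm fun _ => ℝ)

theorem inner_phaseEquivEuclidean {d : ℕ} (p : Rd d × Rd d)
    (ξ : EuclideanSpace ℝ (Fin d ⊕ Fin d)) :
    ⟪phaseEquivEuclidean d p, ξ⟫_ℝ =
      dotR (fun i => ξ (.inl i)) p.1 + dotR (fun i => ξ (.inr i)) p.2 := by
  simp only [PiLp.inner_apply, Fintype.sum_sum_type, dotR, RCLike.inner_apply, conj_trivial]
  congr 1

theorem ae_eq_zero_of_forall_integral_e2pi_mul_eq_zero {d : ℕ} {F : Rd d × Rd d → ℂ}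
    (hF : Integrable F)
    (h : ∀ ξ η : Rd d, ∫ p, e2pi (-(dotR ξ p.1 + dotR η p.2)) * F p = 0) : F =ᵐ[volume] 0 := by
  have hΦ := measurePreserving_phaseEquivEuclidean d
  have hF' : Integrable (F ∘ (phaseEquivEuclidean d).symm) :=
    (hΦ.symm _).integrable_comp_emb (MeasurableEquiv.measurableEmbedding _) |>.2 hF
  have h0 : F ∘ (phaseEquivEuclidean d).symm =ᵐ[volume] 0 := by
    refine hF'.ae_eq_zero_of_fourier_eq_zero (funext fun ξ => ?_)
    rw [Pi.zero_apply, Real.fourier_eq,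
      ← hΦ.integral_comp (MeasurableEquiv.measurableEmbedding _),
      ← h (fun i => ξ (.inl i)) (fun i => ξ (.inr i))]
    refine integral_congr_ae (.of_forall fun p => ?_)
    simp [inner_phaseEquivEuclidean, Real.fourierChar_apply, e2pi, Circle.smul_def]
  have := hΦ.quasiMeasurePreserving.ae_eq_comp h0
  simp only [Function.comp_def, MeasurableEquiv.symm_apply_apply] at this
  exact this

-- Instance search does not see through `volume` on a product type.
instance (d : ℕ) : (volume : Measure (Rd d × Rd d)).IsAddHaarMeasure :=
  Measure.prod.instIsAddHaarMeasure _ _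

theorem conj_e2pi (r : ℝ) : starRingEnd ℂ (e2pi r) = e2pi (-r) := by
  rw [e2pi, e2pi, ← Complex.exp_conj, map_mul, Complex.conj_ofReal, Complex.conj_I]
  push_cast
  ring_nf

theorem norm_gammaK {d : ℕ} (w z : Phase d) (K : Rd d × Rd d → ℂ) (p : Rd d × Rd d) :
    ‖gammaK w z K p‖ = ‖K (p.1 - z.1, p.2 - w.1)‖ := by
  simp [gammaK, e2pi, Complex.norm_exp]

theorem memLp_gammaK {d : ℕ} {K : Rd d × Rd d → ℂ} (hK : MemLp K 2) (w z : Phase d) :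
    MemLp (gammaK w z K) 2 := by
  have hτ := hK.comp_measurePreserving (measurePreserving_sub_right volume (z.1, w.1))
  refine hτ.of_le (.mul (Continuous.aestronglyMeasurable ?_) hτ.1)
    (.of_forall fun p => (norm_gammaK w z K p).le)
  unfold e2pi dotR
  fun_prop

theorem QK_eq_integral_e2pi_mul {d : ℕ} (K L : Rd d × Rd d → ℂ) (a : Phase d) (ξ η : Rd d) :
    QK K L (-a.2, -η) (-a.1, ξ) =
      ∫ p, e2pi (-(dotR ξ p.1 + dotR η p.2)) * (L p * starRingEnd ℂ (K (p + a))) := by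
  refine integral_congr_ae (.of_forall fun p => ?_)
  simp only [gammaK, map_mul, conj_e2pi, sub_neg_eq_add]
  rw [show dotR (-η) p.2 = -dotR η p.2 by simp [dotR], sub_neg_eq_add]
  exact mul_left_comm _ _ _

theorem ae_mul_conj_translate_eq_zero_of_QK_eq_zero {d : ℕ} {K L : Rd d × Rd d → ℂ}
    (hK : MemLp K 2) (hL : MemLp L 2) (hQ : ∀ w z, QK K L w z = 0) (a : Phase d) :
    (fun p => L p * starRingEnd ℂ (K (p + a))) =ᵐ[volume] 0 := by
  have hKa := (hK.comp_measurePreserving (measurePreserving_add_right volume a)).star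
  refine ae_eq_zero_of_forall_integral_e2pi_mul_eq_zero (hL.integrable_mul hKa) fun ξ η => ?_
  rw [← QK_eq_integral_e2pi_mul, hQ]

theorem QK_eq_zero_of_mem_orthogonal {d : ℕ} {S U : Lp ℂ 2 (volume : Measure (Rd d × Rd d))}
    (hU : U ∈ (Submodule.span ℂ {T : Lp ℂ 2 (volume : Measure (Rd d × Rd d)) |
      ∃ w z : Phase d, ⇑T =ᵐ[volume] gammaK w z ⇑S})ᗮ) (w z : Phase d) :
    QK S U w z = 0 := by
  have hγ := memLp_gammaK (Lp.memLp S) w z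
  have hT := (Submodule.mem_orthogonal _ U).1 hU (hγ.toLp _)
    (Submodule.subset_span ⟨w, z, hγ.coeFn_toLp⟩)
  rw [L2.inner_def] at hT
  rw [QK, innerHS, ← hT]
  refine integral_congr_ae ?_
  filter_upwards [hγ.coeFn_toLp] with p hp
  rw [RCLike.inner_apply, hp, mul_comm]

/-- For any nonzero Hilbert–Schmidt operator `S` (represented by its kernel in
`L²(ℝ^{2d})`), the closed linear span of `{π(z) S π(w)^* : w, z ∈ ℝ^{2d}}` is the whole
space of Hilbert–Schmidt operators. -/
theorem gamma_orbit_span_dense {d : ℕ}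
    (S : Lp ℂ 2 (volume : Measure (Rd d × Rd d))) (hS : S ≠ 0) :
    (Submodule.span ℂ
        {T : Lp ℂ 2 (volume : Measure (Rd d × Rd d)) |
          ∃ w z : Phase d, (⇑T : Rd d × Rd d → ℂ) =ᵐ[volume] gammaK w z ⇑S}).topologicalClosure
      = ⊤ := by
  rw [Submodule.topologicalClosure_eq_top_iff, Submodule.eq_bot_iff]
  intro U hU
  have hS' : ¬ (fun p => starRingEnd ℂ (S p)) =ᵐ[volume] 0 := fun h0 =>
    hS <| Lp.eq_zero_iff_ae_eq_zero.2 <| h0.mono fun p hp => by simpa using hp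
  refine Lp.eq_zero_iff_ae_eq_zero.2 <|
    ae_eq_zero_of_forall_mul_translate_ae_eq_zero (Lp.memLp S).star.1 (Lp.memLp U).1 hS' <|
      ae_mul_conj_translate_eq_zero_of_QK_eq_zero (Lp.memLp S) (Lp.memLp U) <|
        QK_eq_zero_of_mem_orthogonal hU
end
end

section
/- For w ∈ R^{2d} and S a Hilbert–Schmidt operator, define the operator modulation β_w(S) := e^{-πi w1·w2/2} π(w/2) S π(w/2). Then the Weyl symbol satisfies σ_{β_w(S)} = M_w σ_S, where M_w is the symplectic modulation M_w F(z) = e^{2πi Ω(z,w)} F(z) with Ω the standard symplectic form Ω(z,w) = x·η − ξ·y for z=(x,ξ), w=(y,η). Equivalently, the spreading function satisfies F_W(β_w(S))(z) = F_W(S)(z − w). -/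
open MeasureTheory Complex Filter Topology
open scoped ENNReal

noncomputable section

/-- Weyl symbol of the operator with integral kernel `K`. -/
def weylSymbol {d : ℕ} (K : Rd d × Rd d → ℂ) : Phase d → ℂ :=
  fun p => ∫ t : Rd d,
    e2pi (-(dotR p.2 t)) * K (p.1 + (2:ℝ)⁻¹ • t, p.1 - (2:ℝ)⁻¹ • t)

/-- Kernel of the operator modulation `β_w(S) = e^{-πi w₁·w₂/2} π(w/2) S π(w/2)`,
expressed in terms of the kernel `K` of `S`. -/
def betaK {d : ℕ} (w : Phase d) (K : Rd d × Rd d → ℂ) : Rd d × Rd d → ℂ :=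
  fun p => e2pi ((2:ℝ)⁻¹ * (dotR w.2 p.1 + dotR w.2 p.2)) *
    K (p.1 - (2:ℝ)⁻¹ • w.1, p.2 + (2:ℝ)⁻¹ • w.1)

/-- Standard symplectic form `Ω(z,w) = x·η - ξ·y` for `z = (x,ξ)`, `w = (y,η)`. -/
def symp {d : ℕ} (z w : Phase d) : ℝ := dotR z.1 w.2 - dotR z.2 w.1

/-! Write `z = (x, ξ)` and `w = (y, η)`. The Weyl symbol at `z` integrates `K` along the
anti-diagonal through `(x, x)`. Substituting `t ↦ t + y` there, `betaK w K` becomes `K` again, up to the phase `e^{2πi η·x}` coming from the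
kernel of `β_w` and the phase `e^{-2πi ξ·y}` coming from the Fourier factor; together these make
`e^{2πi Ω(z,w)}`. -/

lemma e2pi_add (a b : ℝ) : e2pi (a + b) = e2pi a * e2pi b := by
  rw [e2pi, e2pi, e2pi, ← Complex.exp_add]
  push_cast
  ring_nf

lemma dotR_eq_dotProduct {d : ℕ} (x y : Rd d) : dotR x y = x ⬝ᵥ y := rfl

lemma betaK_apply_add_sub {d : ℕ} (w : Phase d) (K : Rd d × Rd d → ℂ) (x t : Rd d) :
    betaK w K (x + (2:ℝ)⁻¹ • (t + w.1), x - (2:ℝ)⁻¹ • (t + w.1))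
      = e2pi (dotR x w.2) * K (x + (2:ℝ)⁻¹ • t, x - (2:ℝ)⁻¹ • t) := by
  have hfst : x + (2:ℝ)⁻¹ • (t + w.1) - (2:ℝ)⁻¹ • w.1 = x + (2:ℝ)⁻¹ • t := by
    rw [smul_add]; abel
  have hsnd : x - (2:ℝ)⁻¹ • (t + w.1) + (2:ℝ)⁻¹ • w.1 = x - (2:ℝ)⁻¹ • t := by
    rw [smul_add]; abel
  have hphase : (2:ℝ)⁻¹ * (dotR w.2 (x + (2:ℝ)⁻¹ • (t + w.1))
      + dotR w.2 (x - (2:ℝ)⁻¹ • (t + w.1))) = dotR x w.2 := by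
    simp only [dotR_eq_dotProduct, dotProduct_add, dotProduct_sub, dotProduct_comm w.2 x]
    ring
  rw [betaK, hfst, hsnd, hphase]

lemma weylSymbol_eq_integral_add {d : ℕ} (K : Rd d × Rd d → ℂ) (p : Phase d) (y : Rd d) :
    weylSymbol K p = ∫ t : Rd d, e2pi (-(dotR p.2 (t + y))) *
      K (p.1 + (2:ℝ)⁻¹ • (t + y), p.1 - (2:ℝ)⁻¹ • (t + y)) :=
  (integral_add_right_eq_self (fun t : Rd d =>
    e2pi (-(dotR p.2 t)) * K (p.1 + (2:ℝ)⁻¹ • t, p.1 - (2:ℝ)⁻¹ • t)) y).symm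

theorem weylSymbol_beta_general {d : ℕ} (w : Phase d) (K : Rd d × Rd d → ℂ)
    (p : Phase d) :
    weylSymbol (betaK w K) p = e2pi (symp p w) * weylSymbol K p := by
  have hphase (t : Rd d) :
      e2pi (-(dotR p.2 (t + w.1))) * e2pi (dotR p.1 w.2)
        = e2pi (symp p w) * e2pi (-(dotR p.2 t)) := by
    rw [← e2pi_add, ← e2pi_add, symp]
    congr 1
    simp only [dotR_eq_dotProduct, dotProduct_add]
    ring
  calc weylSymbol (betaK w K) p
      = ∫ t : Rd d, e2pi (-(dotR p.2 (t + w.1))) *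
          betaK w K (p.1 + (2:ℝ)⁻¹ • (t + w.1), p.1 - (2:ℝ)⁻¹ • (t + w.1)) :=
        weylSymbol_eq_integral_add _ p w.1
    _ = ∫ t : Rd d, e2pi (symp p w) *
          (e2pi (-(dotR p.2 t)) * K (p.1 + (2:ℝ)⁻¹ • t, p.1 - (2:ℝ)⁻¹ • t)) := by
        congr 1 with t
        rw [betaK_apply_add_sub, ← mul_assoc, hphase, mul_assoc]
    _ = e2pi (symp p w) * weylSymbol K p := integral_const_mul _ _

/-- The Weyl symbol of the operator modulation `β_w(S)` is the symplectic modulation of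
the Weyl symbol: `σ_{β_w(S)}(z) = e^{2πi Ω(z,w)} σ_S(z)`. -/
theorem weylSymbol_beta {d : ℕ} (w : Phase d) (K : Rd d × Rd d → ℂ)
    (hK : MemLp K 2 (volume : Measure (Rd d × Rd d))) (p : Phase d) :
    weylSymbol (betaK w K) p = e2pi (symp p w) * weylSymbol K p :=
  weylSymbol_beta_general w K p
end
end
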